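/- Let S = N_out^T·N_in − P. The subspace K = col(N_in^T) + col(N_out^T) of the arc-indexed vector space is invariant under S. -/

import Mathlib

/-! Reversal swaps heads and tails, so `P N_inᵀ = N_outᵀ` and `P N_outᵀ = N_inᵀ`. Hence
`S N_inᵀ = N_outᵀ (N_in N_inᵀ - 1)` and `S N_outᵀ = N_outᵀ N_in N_outᵀ - N_inᵀ` both have columns in
`K`, and `K` is spanned by the columns of `N_inᵀ` and `N_outᵀ`. -/

open Matrix Polynomial

variable {V : Type*} [Fintype V] [DecidableEq V]

/-- Head incidence matrix of the symmetric digraph: entry (v, d) is 1 iff v is the head of d. -/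
def Nin (G : SimpleGraph V) : Matrix V G.Dart ℝ :=
  Matrix.of fun v d => if d.snd = v then 1 else 0

/-- Tail incidence matrix: entry (v, d) is 1 iff v is the tail of d. -/
def Nout (G : SimpleGraph V) : Matrix V G.Dart ℝ :=
  Matrix.of fun v d => if d.fst = v then 1 else 0

/-- Arc-reversal permutation matrix. -/
def Prev (G : SimpleGraph V) : Matrix G.Dart G.Dart ℝ :=
  Matrix.of fun d e => if e = d.symm then 1 else 0

/-- Positive support of a matrix. -/
noncomputable def posSupport {m n : Type*} (M : Matrix m n ℝ) : Matrix m n ℝ :=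
  Matrix.of fun i j => if 0 < M i j then 1 else 0

theorem Matrix.mulVec_mem_range_sup_range {R n m l : Type*} [CommRing R] [Fintype n]
    [DecidableEq n] [Fintype m] [DecidableEq m] [Fintype l] [DecidableEq l]
    {S : Matrix n n R} {A : Matrix n m R} {B : Matrix n l R}
    (hA : ∀ x, S *ᵥ (A *ᵥ x) ∈ LinearMap.range (toLin' A) ⊔ LinearMap.range (toLin' B))
    (hB : ∀ x, S *ᵥ (B *ᵥ x) ∈ LinearMap.range (toLin' A) ⊔ LinearMap.range (toLin' B)) :
    ∀ y ∈ LinearMap.range (toLin' A) ⊔ LinearMap.range (toLin' B),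
      S *ᵥ y ∈ LinearMap.range (toLin' A) ⊔ LinearMap.range (toLin' B) := by
  suffices LinearMap.range (toLin' A) ⊔ LinearMap.range (toLin' B) ≤
      (LinearMap.range (toLin' A) ⊔ LinearMap.range (toLin' B)).comap (toLin' S) from
    fun y hy => this hy
  refine sup_le ?_ ?_
  · rintro _ ⟨x, rfl⟩
    exact hA x
  · rintro _ ⟨x, rfl⟩
    exact hB x

section

variable (G : SimpleGraph V) [DecidableRel G.Adj]

theorem Prev_mul_transpose_Nin : Prev G * (Nin G)ᵀ = (Nout G)ᵀ := by
  ext d v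
  simp only [Prev, Nin, Nout, mul_apply, transpose_apply, of_apply]
  rw [Finset.sum_eq_single d.symm] <;> simp_all

theorem Prev_mul_transpose_Nout : Prev G * (Nout G)ᵀ = (Nin G)ᵀ := by
  ext d v
  simp only [Prev, Nin, Nout, mul_apply, transpose_apply, of_apply]
  rw [Finset.sum_eq_single d.symm] <;> simp_all

end

theorem stmt10_general (G : SimpleGraph V) [DecidableRel G.Adj]
    (K : Submodule ℝ (G.Dart → ℝ))
    (hK : K = LinearMap.range (Matrix.toLin' (Nin G)ᵀ) ⊔
              LinearMap.range (Matrix.toLin' (Nout G)ᵀ)) :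
    ∀ y ∈ K, ((Nout G)ᵀ * Nin G - Prev G).mulVec y ∈ K := by
  subst hK
  refine mulVec_mem_range_sup_range (fun x => ?_) (fun x => ?_)
  · rw [mulVec_mulVec, Matrix.sub_mul, Matrix.mul_assoc, Prev_mul_transpose_Nin, sub_mulVec,
      ← mulVec_mulVec]
    exact sub_mem (Submodule.mem_sup_right (LinearMap.mem_range_self _ _))
      (Submodule.mem_sup_right (LinearMap.mem_range_self _ _))
  · rw [mulVec_mulVec, Matrix.sub_mul, Matrix.mul_assoc, Prev_mul_transpose_Nout, sub_mulVec,
      ← mulVec_mulVec]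
    exact sub_mem (Submodule.mem_sup_right (LinearMap.mem_range_self _ _))
      (Submodule.mem_sup_left (LinearMap.mem_range_self _ _))

/-- K = col(N_in^T) + col(N_out^T) is invariant under S = N_out^T N_in - P. -/
theorem stmt10 (G : SimpleGraph V) [DecidableRel G.Adj] (k : ℕ)
    (hreg : G.IsRegularOfDegree k)
    (K : Submodule ℝ (G.Dart → ℝ))
    (hK : K = LinearMap.range (Matrix.toLin' (Nin G)ᵀ) ⊔
              LinearMap.range (Matrix.toLin' (Nout G)ᵀ)) :
    ∀ y ∈ K, ((Nout G)ᵀ * Nin G - Prev G).mulVec y ∈ K :=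
  stmt10_general G K hK
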